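/- arXiv:1804.08182 — 7 statements merged into one kernel-verified Lean document; each statement's English description precedes it below -/
import Mathlib

section
/- An R-module M is finitely presented if and only if for every family (S_i)_{i∈I} of R-modules the canonical map M ⊗_R (∏_{i∈I} S_i) → ∏_{i∈I} (M ⊗_R S_i) is bijective. -/
/-- The canonical map `M ⊗[R] (∏ i, S i) →ₗ[R] ∏ i, (M ⊗[R] S i)`,
sending `m ⊗ (s i)_i` to `(m ⊗ s i)_i`. -/
noncomputable def tensorPiMap (R : Type) [CommRing R] (M : Type) [AddCommGroup M] [Module R M]
    {I : Type} (S : I → Type) [∀ i, AddCommGroup (S i)] [∀ i, Module R (S i)] :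
    (TensorProduct R M (∀ i, S i)) →ₗ[R] ∀ i, TensorProduct R M (S i) :=
  LinearMap.pi fun i => TensorProduct.map (LinearMap.id) (LinearMap.proj i)

section Aux

variable (R : Type) [CommRing R] {I : Type} (S : I → Type)
  [∀ i, AddCommGroup (S i)] [∀ i, Module R (S i)]

@[simp] lemma tensorPiMap_tmul (M : Type) [AddCommGroup M] [Module R M]
    (m : M) (f : ∀ i, S i) (i : I) :
    tensorPiMap R M S (m ⊗ₜ f) i = m ⊗ₜ f i := rfl

/-- Naturality of `tensorPiMap` in the first variable. -/
lemma tensorPiMap_naturality {A B : Type} [AddCommGroup A] [Module R A]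
    [AddCommGroup B] [Module R B] (f : A →ₗ[R] B) :
    (LinearMap.pi fun i => (f.rTensor (S i)) ∘ₗ LinearMap.proj i) ∘ₗ tensorPiMap R A S
      = tensorPiMap R B S ∘ₗ f.rTensor (∀ i, S i) := by
  apply TensorProduct.ext'
  intro a p
  funext i
  simp [tensorPiMap]

/-- The swap of two Pi types as a linear equivalence. -/
noncomputable def piSwapEquiv (b : Type) :
    (∀ i, b → S i) ≃ₗ[R] (b → ∀ i, S i) :=
  LinearEquiv.ofLinear
    (LinearMap.pi fun j => LinearMap.pi fun i => LinearMap.proj j ∘ₗ LinearMap.proj i)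
    (LinearMap.pi fun i => LinearMap.pi fun j => LinearMap.proj i ∘ₗ LinearMap.proj j)
    (by ext f i j; rfl) (by ext f j i; rfl)

lemma tensorPiMap_free_bijective (b : Type) [Fintype b] [DecidableEq b] :
    Function.Bijective (tensorPiMap R (b → R) S) := by
  classical
  set P := (∀ i, S i) with hP
  let E1 : TensorProduct R (b → R) P ≃ₗ[R] (b → P) :=
    (TensorProduct.comm R (b → R) P) ≪≫ₗ TensorProduct.piScalarRight R R P b
  let E2 : (∀ i, TensorProduct R (b → R) (S i)) ≃ₗ[R] (b → P) :=
    (LinearEquiv.piCongrRight fun i =>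
      (TensorProduct.comm R (b → R) (S i)) ≪≫ₗ TensorProduct.piScalarRight R R (S i) b)
      ≪≫ₗ piSwapEquiv R S b
  have key : (E2 : (∀ i, TensorProduct R (b → R) (S i)) →ₗ[R] (b → P)) ∘ₗ
      tensorPiMap R (b → R) S = (E1 : TensorProduct R (b → R) P →ₗ[R] (b → P)) := by
    apply TensorProduct.ext'
    intro x f
    funext j
    simp only [E1, E2, piSwapEquiv, tensorPiMap, LinearMap.coe_comp, Function.comp_apply,
      LinearEquiv.coe_coe, LinearEquiv.trans_apply, LinearEquiv.ofLinear_apply,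
      LinearEquiv.piCongrRight_apply, LinearMap.pi_apply, LinearMap.proj_apply,
      TensorProduct.map_tmul, LinearMap.id_coe, id_eq, TensorProduct.comm_tmul,
      TensorProduct.piScalarRight_apply, TensorProduct.piScalarRightHom_tmul]
    funext i
    rfl
  have h2 : ⇑(tensorPiMap R (b → R) S) = ⇑E2.symm ∘ ⇑E1 := by
    funext x
    have := congrArg (fun (g : TensorProduct R (b → R) P →ₗ[R] (b → P)) => g x) key
    simp only [LinearMap.coe_comp, Function.comp_apply, LinearEquiv.coe_coe] at this
    simp [← this]
  rw [h2]
  exact E2.symm.bijective.comp E1.bijective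

end Aux

section Main

variable (R : Type) [CommRing R] {I : Type} (S : I → Type)
  [∀ i, AddCommGroup (S i)] [∀ i, Module R (S i)]
  (M : Type) [AddCommGroup M] [Module R M]

open LinearMap TensorProduct

lemma tensorPiMap_bijective_of_fp [Module.FinitePresentation R M] :
    Function.Bijective (tensorPiMap R M S) := by
  classical
  obtain ⟨n, g, hg⟩ := Module.Finite.exists_fin' R M
  have hK : (LinearMap.ker g).FG := Module.FinitePresentation.fg_ker g hg
  haveI : Module.Finite R (LinearMap.ker g) :=
    Module.Finite.iff_fg.mpr hK
  obtain ⟨m, h, hh⟩ := Module.Finite.exists_fin' R (LinearMap.ker g)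
  set f : (Fin m → R) →ₗ[R] (Fin n → R) := (LinearMap.ker g).subtype ∘ₗ h with hf
  have hexact : Function.Exact f g := by
    rw [LinearMap.exact_iff, hf, LinearMap.range_comp, LinearMap.range_eq_top.mpr hh,
      Submodule.map_top, Submodule.range_subtype]
  set P := (∀ i, S i) with hPdef
  have eB := tensorPiMap_free_bijective R S (Fin n)
  have eA := tensorPiMap_free_bijective R S (Fin m)
  have natg := tensorPiMap_naturality R S g
  have natf := tensorPiMap_naturality R S f
  constructor
  · rw [injective_iff_map_eq_zero]
    intro y hy
    obtain ⟨x, rfl⟩ := LinearMap.rTensor_surjective P hg y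
    have h1 : ∀ i, g.rTensor (S i) (tensorPiMap R (Fin n → R) S x i) = 0 := by
      intro i
      have := congrArg (fun L : TensorProduct R (Fin n → R) P →ₗ[R] ∀ i, TensorProduct R M (S i)
        => L x i) natg
      simp only [LinearMap.coe_comp, Function.comp_apply, LinearMap.pi_apply,
        LinearMap.proj_apply] at this
      rw [this, hy]
      rfl
    have h2 : ∀ i, ∃ v, f.rTensor (S i) v = tensorPiMap R (Fin n → R) S x i := by
      intro i
      exact (rTensor_exact (S i) hexact hg _).mp (h1 i)
    choose v hv using h2
    obtain ⟨w, hw⟩ := eA.2 v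
    have hfeq : tensorPiMap R (Fin n → R) S (f.rTensor P w) = tensorPiMap R (Fin n → R) S x := by
      have := congrArg (fun L : TensorProduct R (Fin m → R) P →ₗ[R]
        ∀ i, TensorProduct R (Fin n → R) (S i) => L w) natf
      simp only [LinearMap.coe_comp, Function.comp_apply] at this
      rw [← this, hw]
      funext i
      simp only [LinearMap.pi_apply, LinearMap.coe_comp, Function.comp_apply,
        LinearMap.proj_apply, hv]
    have hx : f.rTensor P w = x := eB.1 hfeq
    have hgf : g.rTensor P (f.rTensor P w) = 0 := by
      rw [← LinearMap.comp_apply, ← LinearMap.rTensor_comp, hexact.linearMap_comp_eq_zero]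
      simp
    rw [← hx, hgf]
  · intro t
    choose u hu using fun i => LinearMap.rTensor_surjective (S i) hg (t i)
    obtain ⟨x, hx⟩ := eB.2 u
    refine ⟨g.rTensor P x, ?_⟩
    funext i
    have := congrArg (fun L : TensorProduct R (Fin n → R) P →ₗ[R] ∀ i, TensorProduct R M (S i)
      => L x i) natg
    simp only [LinearMap.coe_comp, Function.comp_apply, LinearMap.pi_apply,
      LinearMap.proj_apply] at this
    rw [← this, hx, hu]

lemma finite_of_surj
    (H : Function.Surjective (tensorPiMap R M (fun _ : M => R))) : Module.Finite R M := by
  classical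
  obtain ⟨x, hx⟩ := H (fun m => m ⊗ₜ (1:R))
  obtain ⟨s, rfl⟩ := TensorProduct.exists_finset x
  refine ⟨⟨s.image Prod.fst, ?_⟩⟩
  rw [eq_top_iff]
  rintro q -
  have h1 := congrFun hx q
  simp only [map_sum, Finset.sum_apply, tensorPiMap_tmul] at h1
  have h2 := congrArg (TensorProduct.rid R M) h1
  simp only [map_sum, TensorProduct.rid_tmul, one_smul] at h2
  rw [← h2]
  exact Submodule.sum_mem _ fun p hp =>
    Submodule.smul_mem _ _ (Submodule.subset_span (Finset.mem_image_of_mem _ hp))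

end Main

section Main2

variable (R : Type) [CommRing R] (M : Type) [AddCommGroup M] [Module R M]

open LinearMap TensorProduct

lemma fg_ker_of_bij {n : ℕ} (g : (Fin n → R) →ₗ[R] M) (hg : Function.Surjective g)
    (H : Function.Injective (tensorPiMap R M (fun _ : LinearMap.ker g => R))) :
    (LinearMap.ker g).FG := by
  classical
  set K := LinearMap.ker g with hKdef
  have eF := tensorPiMap_free_bijective R (fun _ : K => R) (Fin n)
  obtain ⟨x, hx⟩ := eF.2 (fun k : K => (k : Fin n → R) ⊗ₜ (1:R))
  have natg := tensorPiMap_naturality R (fun _ : K => R) g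
  have hy : tensorPiMap R M (fun _ : K => R) (g.rTensor _ x) = 0 := by
    have := congrArg (fun L : TensorProduct R (Fin n → R) (K → R) →ₗ[R]
      ∀ _ : K, TensorProduct R M R => L x) natg
    simp only [LinearMap.coe_comp, Function.comp_apply] at this
    rw [← this]
    funext k
    simp only [LinearMap.pi_apply, LinearMap.coe_comp, Function.comp_apply,
      LinearMap.proj_apply, hx, LinearMap.rTensor_tmul]
    have : g (k : Fin n → R) = 0 := k.2
    rw [this, TensorProduct.zero_tmul]
    rfl
  have hy0 : g.rTensor (K → R) x = 0 := H (by rw [hy, map_zero])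
  have hexact : Function.Exact (K.subtype) g := by
    rw [LinearMap.exact_iff, Submodule.range_subtype]
  obtain ⟨z, hz⟩ := (rTensor_exact (K → R) hexact hg x).mp hy0
  obtain ⟨s, rfl⟩ := TensorProduct.exists_finset z
  have natS := tensorPiMap_naturality R (fun _ : K => R) K.subtype
  -- for each k : K, k is in the span of the first components of s
  have key : ∀ k : K, (k : Fin n → R) = ∑ p ∈ s, p.2 k • (p.1 : Fin n → R) := by
    intro k
    have h1 : tensorPiMap R (Fin n → R) (fun _ : K => R) x k = (k : Fin n → R) ⊗ₜ (1:R) := by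
      rw [hx]
    have h2 := congrArg (fun L : TensorProduct R K (K → R) →ₗ[R]
      ∀ _ : K, TensorProduct R (Fin n → R) R => L (∑ p ∈ s, p.1 ⊗ₜ p.2) k) natS
    simp only [LinearMap.coe_comp, Function.comp_apply, LinearMap.pi_apply,
      LinearMap.proj_apply] at h2
    rw [hz] at h2
    rw [← h2] at h1
    have h3 := congrArg (TensorProduct.rid R (Fin n → R)) h1
    simp only [map_sum, Finset.sum_apply, tensorPiMap_tmul, LinearMap.rTensor_tmul,
      TensorProduct.rid_tmul, one_smul, Submodule.coe_subtype] at h3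
    rw [← h3]
  have hfin : Module.Finite R K := by
    refine ⟨⟨s.image Prod.fst, ?_⟩⟩
    rw [eq_top_iff]
    rintro k -
    have : k = ∑ p ∈ s, p.2 k • p.1 := by
      apply Subtype.ext
      rw [key k]
      push_cast
      rfl
    rw [this]
    exact Submodule.sum_mem _ fun p hp =>
      Submodule.smul_mem _ _ (Submodule.subset_span (Finset.mem_image_of_mem _ hp))
  exact Module.Finite.iff_fg.mp hfin

/-- An `R`-module `M` is finitely presented iff for every family `(S i)` of `R`-modules the
canonical map `M ⊗ ∏ S i → ∏ (M ⊗ S i)` is bijective. -/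
theorem stmt0 (R : Type) [CommRing R] (M : Type) [AddCommGroup M] [Module R M] :
    Module.FinitePresentation R M ↔
      ∀ (I : Type) (S : I → Type) (_ : ∀ i, AddCommGroup (S i)) (_ : ∀ i, Module R (S i)),
        Function.Bijective (tensorPiMap R M S) := by
  constructor
  · intro hfp I S hAG hMod
    exact tensorPiMap_bijective_of_fp R S M
  · intro H
    haveI : Module.Finite R M :=
      finite_of_surj R M (H M (fun _ => R) (fun _ => inferInstance) (fun _ => inferInstance)).2
    obtain ⟨n, g, hg⟩ := Module.Finite.exists_fin' R M
    have hK : (LinearMap.ker g).FG :=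
      fg_ker_of_bij R M g hg
        (H (LinearMap.ker g) (fun _ => R) (fun _ => inferInstance) (fun _ => inferInstance)).1
    exact Module.finitePresentation_of_surjective g hg hK

end Main2
end

section
/- An R-module M is finitely generated if and only if for every family (S_i)_{i∈I} of R-modules the canonical map M ⊗_R (∏_{i∈I} S_i) → ∏_{i∈I} (M ⊗_R S_i) is surjective. -/
open TensorProduct in
lemma aux_exists (R : Type) [CommRing R] (M : Type) [AddCommGroup M] [Module R M]
    {n : ℕ} (v : Fin n → M) (hv : Submodule.span R (Set.range v) = ⊤)
    (S : Type) [AddCommGroup S] [Module R S] (x : TensorProduct R M S) :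
    ∃ s : Fin n → S, x = ∑ j, v j ⊗ₜ[R] s j := by
  let φ : (Fin n → S) →ₗ[R] TensorProduct R M S :=
    ∑ j, (TensorProduct.mk R M S (v j)).comp (LinearMap.proj j)
  have hφ : ∀ s : Fin n → S, φ s = ∑ j, v j ⊗ₜ[R] s j := fun s => by
    simp [φ]
  have hsurj : Function.Surjective φ := by
    rw [← LinearMap.range_eq_top, ← top_le_iff, ← TensorProduct.span_tmul_eq_top R M S,
      Submodule.span_le]
    rintro _ ⟨m, t, rfl⟩
    have hm : m ∈ Submodule.span R (Set.range v) := hv ▸ Submodule.mem_top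
    induction hm using Submodule.span_induction with
    | mem m hm =>
      obtain ⟨j, rfl⟩ := hm
      refine ⟨Pi.single j t, ?_⟩
      rw [hφ, Finset.sum_eq_single j (fun b _ hb => by simp [Pi.single_eq_of_ne hb]) (by simp)]
      simp
    | zero => exact ⟨0, by simp [hφ]⟩
    | add a b _ _ ha hb =>
      obtain ⟨sa, hsa⟩ := ha
      obtain ⟨sb, hsb⟩ := hb
      exact ⟨sa + sb, by rw [map_add, hsa, hsb, ← TensorProduct.add_tmul]⟩
    | smul c a _ ha =>
      obtain ⟨sa, hsa⟩ := ha
      exact ⟨c • sa, by rw [map_smul, hsa, TensorProduct.smul_tmul']⟩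
  obtain ⟨s, hs⟩ := hsurj x
  exact ⟨s, by rw [← hs, hφ]⟩

/-- An `R`-module `M` is finitely generated iff for every family `(S i)` of `R`-modules the
canonical map `M ⊗ ∏ S i → ∏ (M ⊗ S i)` is surjective. -/
theorem stmt1 (R : Type) [CommRing R] (M : Type) [AddCommGroup M] [Module R M] :
    Module.Finite R M ↔
      ∀ (I : Type) (S : I → Type) (_ : ∀ i, AddCommGroup (S i)) (_ : ∀ i, Module R (S i)),
        Function.Surjective (tensorPiMap R M S) := by
  constructor
  · intro hM I S _ _ y
    obtain ⟨n, v, hv⟩ := Module.Finite.exists_fin (R := R) (M := M)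
    choose s hs using fun i => aux_exists R M v hv (S i) (y i)
    refine ⟨∑ j, v j ⊗ₜ[R] (fun i => s i j), ?_⟩
    ext i
    simp [tensorPiMap, hs i]
  · intro h
    classical
    have hsurj := h M (fun _ => R) (fun _ => inferInstance) (fun _ => inferInstance)
    obtain ⟨x, hx⟩ := hsurj (fun m => m ⊗ₜ[R] 1)
    obtain ⟨t, rfl⟩ := TensorProduct.exists_finset x
    refine ⟨⟨t.image Prod.fst, ?_⟩⟩
    rw [eq_top_iff]
    intro m _
    have hm := congrFun hx m
    simp only [tensorPiMap, LinearMap.pi_apply, map_sum, TensorProduct.map_tmul,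
      LinearMap.id_coe, id_eq, LinearMap.proj_apply] at hm
    have := congrArg (TensorProduct.rid R M) hm
    simp only [map_sum, TensorProduct.rid_tmul, one_smul] at this
    rw [← this]
    exact Submodule.sum_mem _ fun p hp =>
      Submodule.smul_mem _ _ (Submodule.subset_span (by simp only [Finset.coe_image, Set.mem_image, Finset.mem_coe]; exact ⟨p, hp, rfl⟩))
end

section
/- For any right R-module M and any injective cogenerator construction D(M) = Hom_ℤ(M, ℚ/ℤ), the double dual D²(M) is a pure-injective R-module. -/
/-- The double character module `D²(M) = Hom_ℤ(Hom_ℤ(M, ℚ/ℤ), ℚ/ℤ)` of an `R`-module `M`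
is pure-injective: every `R`-linear map `N → D²(M)` extends along any pure monomorphism
`N → N'`. -/
theorem stmt8 (R : Type) [CommRing R] (M : Type) [AddCommGroup M] [Module R M]
    (N N' : Type) [AddCommGroup N] [AddCommGroup N'] [Module R N] [Module R N']
    (i : N →ₗ[R] N') (hi : Function.Injective i)
    (hpure : ∀ (S : Type) (_ : AddCommGroup S) (_ : Module R S),
      Function.Injective (TensorProduct.map i (LinearMap.id : S →ₗ[R] S))) :
    Function.Surjective
      (fun (g : N' →ₗ[R] CharacterModule (CharacterModule M)) => g.comp i) := by
  have h := (rTensor_injective_iff_lcomp_surjective (B := CharacterModule M) (f := i)).mp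
    (hpure (CharacterModule M) _ _)
  exact h
end

section
/- For abelian groups, and for any R-module M, the canonical embedding i_M : M → D²(M) = Hom_ℤ(Hom_ℤ(M, ℚ/ℤ), ℚ/ℤ) is a pure monomorphism of R-modules. -/
/-- The canonical `R`-linear evaluation map `i_M : M → D²(M)`, where
`D(M) = Hom_ℤ(M, ℚ/ℤ)` is the character module, `i_M(m)(w) = w(m)`. -/
def doubleDualMap (R : Type) [CommRing R] (M : Type) [AddCommGroup M] [Module R M] :
    M →ₗ[R] CharacterModule (CharacterModule M) where
  toFun m := AddMonoidHom.mk' (fun c => c m) (fun c₁ c₂ => rfl)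
  map_add' m₁ m₂ := by ext c; exact c.map_add m₁ m₂
  map_smul' r m := by ext c; rfl

set_option synthInstance.maxHeartbeats 800000 in
/-- The canonical embedding `i_M : M → D²(M)` is a pure monomorphism of `R`-modules:
it is injective, and it stays injective after tensoring with any `R`-module `S`. -/
theorem stmt9 (R : Type) [CommRing R] (M : Type) [AddCommGroup M] [Module R M] :
    Function.Injective (doubleDualMap R M) ∧
      ∀ (S : Type) (_ : AddCommGroup S) (_ : Module R S),
        Function.Injective
          (TensorProduct.map (doubleDualMap R M) (LinearMap.id : S →ₗ[R] S)) := by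
  constructor
  · rw [injective_iff_map_eq_zero]
    intro m hm
    apply CharacterModule.eq_zero_of_character_apply
    intro c
    exact congr($(hm) c)
  · intro S _ _
    rw [injective_iff_map_eq_zero]
    intro x hx
    apply CharacterModule.eq_zero_of_character_apply
    intro χ
    -- curry χ (after commuting the tensor factors) to get `L : S →ₗ[R] D(M)`
    let L : S →ₗ[R] CharacterModule M :=
      CharacterModule.curry (χ.comp (TensorProduct.comm R S M).toLinearMap.toAddMonoidHom)
    -- evaluation against `L` gives `E : D²(M) →ₗ[R] D(S)`
    let E : CharacterModule (CharacterModule M) →ₗ[R] CharacterModule S :=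
      { toFun := fun g => AddMonoidHom.mk' (fun s => g (L s)) (fun s₁ s₂ => by
          show g (L (s₁ + s₂)) = g (L s₁) + g (L s₂)
          rw [map_add, map_add])
        map_add' := fun g₁ g₂ => rfl
        map_smul' := fun r g => by
          ext s
          show (r • g) (L s) = g (L (r • s))
          rw [CharacterModule.smul_apply]
          exact congrArg g (L.map_smul r s).symm }
    let ψ : CharacterModule
        (TensorProduct R (CharacterModule (CharacterModule M)) S) := CharacterModule.uncurry E
    have key : ∀ y : TensorProduct R M S,
        χ y = ψ (TensorProduct.map (doubleDualMap R M) (LinearMap.id : S →ₗ[R] S) y) := by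
      intro y
      induction y using TensorProduct.induction_on with
      | zero => rw [map_zero]; exact (map_zero ψ).symm
      | tmul m s =>
          simp only [TensorProduct.map_tmul, LinearMap.id_apply, ψ,
            CharacterModule.uncurry_apply, TensorProduct.liftAddHom_tmul]
          show χ (m ⊗ₜ[R] s) = (doubleDualMap R M m) (L s)
          show χ (m ⊗ₜ[R] s) = L s m
          show χ (m ⊗ₜ[R] s) = χ ((TensorProduct.comm R S M) (s ⊗ₜ[R] m))
          rw [TensorProduct.comm_tmul]
      | add a b ha hb => rw [map_add, map_add, map_add, ha, hb]
    rw [key, hx, map_zero]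
end

section
/- Let F : ModuleCat R ⥤ AddCommGrp be an additive functor that preserves filtered colimits and is right exact (preserves finite colimits). Then F is naturally isomorphic to the functor S ↦ F(R) ⊗_R S, where F(R) carries its canonical right R-module structure. -/
open CategoryTheory

variable (R : Type) [CommRing R] (F : ModuleCat R ⥤ AddCommGrpCat) [F.Additive]

/-- The canonical `R`-module structure on `F(R)`, given by `r • m = F(·r)(m)` where
`·r : R → R` is multiplication by `r`. -/
noncomputable def wattsModule : Module R (F.obj (ModuleCat.of R R)) where
  smul r m := F.map (ModuleCat.ofHom (LinearMap.lsmul R R r)) m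
  one_smul m := by
    show F.map (ModuleCat.ofHom (LinearMap.lsmul R R 1)) m = m
    have h : ModuleCat.ofHom (LinearMap.lsmul R R 1) = 𝟙 (ModuleCat.of R R) := by
      ext x; simp
    rw [h, F.map_id]; rfl
  mul_smul r s m := by
    show F.map (ModuleCat.ofHom (LinearMap.lsmul R R (r * s))) m = _
    have h : ModuleCat.ofHom (LinearMap.lsmul R R (r * s)) =
        ModuleCat.ofHom (LinearMap.lsmul R R s) ≫ ModuleCat.ofHom (LinearMap.lsmul R R r) := by
      ext x; simp [mul_smul, mul_comm, mul_assoc, mul_left_comm]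
    rw [h, F.map_comp]; rfl
  smul_zero r := map_zero _
  smul_add r m₁ m₂ := map_add _ m₁ m₂
  add_smul r s m := by
    show F.map (ModuleCat.ofHom (LinearMap.lsmul R R (r + s))) m = _
    have h : ModuleCat.ofHom (LinearMap.lsmul R R (r + s)) =
        ModuleCat.ofHom (LinearMap.lsmul R R r) + ModuleCat.ofHom (LinearMap.lsmul R R s) := by
      ext x; simp [add_smul, LinearMap.add_apply]
    rw [h, F.map_add]; rfl
  zero_smul m := by
    show F.map (ModuleCat.ofHom (LinearMap.lsmul R R 0)) m = 0
    have h : ModuleCat.ofHom (LinearMap.lsmul R R 0) = 0 := by ext x; simp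
    rw [h, F.map_zero]; rfl


open CategoryTheory.Limits

lemma isIso_app_of_isColimit {C D : Type*} [Category C] [Category D] {G F : C ⥤ D}
    (α : G ⟶ F) {J : Type*} [Category J] (K : J ⥤ C)
    (c : Cocone K) (hc : IsColimit c) [PreservesColimit K G] [PreservesColimit K F]
    (h : ∀ j, IsIso (α.app (K.obj j))) : IsIso (α.app c.pt) := by
  have hG : IsColimit (G.mapCocone c) := isColimitOfPreserves G hc
  have hF : IsColimit (F.mapCocone c) := isColimitOfPreserves F hc
  haveI := h
  let e : K ⋙ G ≅ K ⋙ F := NatIso.ofComponents (fun j => asIso (α.app (K.obj j)))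
      (fun f => α.naturality _)
  have heq : α.app c.pt = (IsColimit.coconePointsIsoOfNatIso hG hF e).hom := by
    refine hG.hom_ext (fun j => ?_)
    rw [IsColimit.comp_coconePointsIsoOfNatIso_hom]
    simp [e]; rfl
  rw [heq]
  infer_instance

lemma isIso_app_of_iso {C D : Type*} [Category C] [Category D] {G F : C ⥤ D}
    (α : G ⟶ F) {X Y : C} (e : X ≅ Y) (h : IsIso (α.app X)) :
    IsIso (α.app Y) := by
  have : α.app Y = G.map e.inv ≫ α.app X ≫ F.map e.hom := by
    rw [← α.naturality, ← G.map_comp_assoc, e.inv_hom_id, G.map_id, Category.id_comp]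
  rw [this]
  infer_instance

noncomputable def freeCofan (ι : Type) : Cofan (fun _ : ι => ModuleCat.of R R) :=
  Cofan.mk (ModuleCat.of R (ι →₀ R)) fun i => ModuleCat.ofHom (Finsupp.lsingle i)

noncomputable def freeCofanIsColimit (ι : Type) : IsColimit (freeCofan R ι) :=
  mkCofanColimit _
    (fun s => ModuleCat.ofHom ((Finsupp.lsum ℕ) fun i => (s.inj i).hom))
    (fun s i => ModuleCat.hom_ext (LinearMap.ext fun x => Finsupp.lsum_single (S := ℕ) _ _ _))
    (fun s m hm => ModuleCat.hom_ext (Finsupp.lhom_ext fun i b =>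
      (LinearMap.congr_fun (congrArg ModuleCat.Hom.hom (hm i)) b).trans (Finsupp.lsum_single (S := ℕ) (fun i => (s.inj i).hom) i b).symm))

noncomputable def freeDiagram (ι : Type) : Finset ι ⥤ ModuleCat R where
  obj t := ModuleCat.of R (↥t →₀ R)
  map {s t} h := ModuleCat.ofHom
    (Finsupp.lmapDomain R R (fun x => (⟨x.1, leOfHom h x.2⟩ : ↥t)))
  map_id t := ModuleCat.hom_ext (Finsupp.lhom_ext fun a b => Finsupp.mapDomain_single)
  map_comp {s t u} f g := ModuleCat.hom_ext (Finsupp.lhom_ext fun a b => by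
    show Finsupp.mapDomain _ _ = Finsupp.mapDomain _ (Finsupp.mapDomain _ _)
    simp [Finsupp.mapDomain_single])

noncomputable def freeCocone (ι : Type) : Cocone (freeDiagram R ι) where
  pt := ModuleCat.of R (ι →₀ R)
  ι := {
    app := fun t => ModuleCat.ofHom (Finsupp.lmapDomain R R (Subtype.val : ↥t → ι))
    naturality := fun s t h => ModuleCat.hom_ext (Finsupp.lhom_ext fun a b => by
      show Finsupp.mapDomain _ (Finsupp.mapDomain _ _) = (𝟙 _ : ModuleCat.of R (ι →₀ R) ⟶ _) (Finsupp.mapDomain _ _)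
      simp [Finsupp.mapDomain_single]) }

noncomputable def freeCoconeIsColimit (ι : Type) : IsColimit (freeCocone R ι) where
  desc s := ModuleCat.ofHom ((Finsupp.lsum ℕ) fun i =>
    (show ModuleCat.of R (↥({i} : Finset ι) →₀ R) ⟶ s.pt from s.ι.app {i}).hom.comp
      (Finsupp.lsingle (⟨i, Finset.mem_singleton_self i⟩ : ↥({i} : Finset ι))))
  fac s t := ModuleCat.hom_ext (Finsupp.lhom_ext fun a b => by
    have h : ({a.1} : Finset ι) ≤ t := Finset.singleton_subset_iff.mpr a.2
    have hn := LinearMap.congr_fun (congrArg ModuleCat.Hom.hom (s.ι.naturality (homOfLE h)))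
      (Finsupp.single (⟨a.1, Finset.mem_singleton_self _⟩ : ↥({a.1} : Finset ι)) b)
    have h2 : Finsupp.mapDomain (fun x : ↥({a.1} : Finset ι) => (⟨x.1, leOfHom (homOfLE h) x.2⟩ : ↥t))
        (Finsupp.single (⟨a.1, Finset.mem_singleton_self _⟩ : ↥({a.1} : Finset ι)) b)
        = Finsupp.single a b := Finsupp.mapDomain_single
    show ((Finsupp.lsum ℕ) _) (Finsupp.mapDomain _ (Finsupp.single a b)) = _
    rw [Finsupp.mapDomain_single, Finsupp.lsum_single]
    exact hn.symm.trans (congrArg (s.ι.app t).hom h2))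
  uniq s m hm := ModuleCat.hom_ext (Finsupp.lhom_ext fun i b => by
    have h1 := LinearMap.congr_fun (congrArg ModuleCat.Hom.hom (hm {i}))
      (Finsupp.single (⟨i, Finset.mem_singleton_self i⟩ : ↥({i} : Finset ι)) b)
    have h2 : Finsupp.mapDomain (Subtype.val : ↥({i} : Finset ι) → ι)
        (Finsupp.single (⟨i, Finset.mem_singleton_self i⟩ : ↥({i} : Finset ι)) b)
        = Finsupp.single i b := Finsupp.mapDomain_single
    show m.hom (Finsupp.single i b) = ((Finsupp.lsum ℕ) _) (Finsupp.single i b)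
    rw [Finsupp.lsum_single]
    exact (congrArg (⇑m.hom) h2.symm).trans h1)

open MonoidalCategory TensorProduct

/-- `F(R)` as an object of `ModuleCat R` with the Watts module structure. -/
noncomputable def WM : ModuleCat R :=
  letI := wattsModule R F
  ModuleCat.of R (F.obj (ModuleCat.of R R))

lemma WM_smul (r : R) (m : ↥(WM R F)) :
    r • m = F.map (ModuleCat.ofHom (LinearMap.lsmul R R r)) m := rfl

/-- The components of the comparison map `F(R) ⊗[R] S →+ F(S)`. -/
noncomputable def alphaAddHom (S : ModuleCat R) :
    TensorProduct R ↥(WM R F) ↥S →+ ↥(F.obj S) :=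
  TensorProduct.liftAddHom
    (AddMonoidHom.mk'
      (fun m => AddMonoidHom.mk'
        (fun s => F.map (ModuleCat.ofHom (LinearMap.toSpanSingleton R S s)) m)
        (fun s s' => by
          have h' : LinearMap.toSpanSingleton R S (s + s') =
              LinearMap.toSpanSingleton R S s + LinearMap.toSpanSingleton R S s' := by
            refine LinearMap.ext fun x => ?_
            exact smul_add x s s'
          have h : ModuleCat.ofHom (LinearMap.toSpanSingleton R S (s + s')) =
              ModuleCat.ofHom (LinearMap.toSpanSingleton R S s) +
              ModuleCat.ofHom (LinearMap.toSpanSingleton R S s') := congrArg ModuleCat.ofHom h'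
          show F.map (ModuleCat.ofHom (LinearMap.toSpanSingleton R S (s + s'))) m = _
          rw [h, F.map_add]; rfl))
      (fun m m' => by
        apply AddMonoidHom.ext; intro s
        exact map_add (F.map (ModuleCat.ofHom (LinearMap.toSpanSingleton R S s))).hom m m'))
    (fun r m s => by
      show F.map (ModuleCat.ofHom (LinearMap.toSpanSingleton R S s)) (r • m) = _
      rw [WM_smul]
      have h' : (LinearMap.toSpanSingleton R S s).comp (LinearMap.lsmul R R r) =
          LinearMap.toSpanSingleton R S (r • s) := by
        refine LinearMap.ext fun x => ?_
        show (r * x) • s = x • (r • s)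
        rw [mul_comm, mul_smul]
      have h : ModuleCat.ofHom (LinearMap.lsmul R R r) ≫
          ModuleCat.ofHom (LinearMap.toSpanSingleton R S s) =
          ModuleCat.ofHom (LinearMap.toSpanSingleton R S (r • s)) := congrArg ModuleCat.ofHom h'
      calc F.map (ModuleCat.ofHom (LinearMap.toSpanSingleton R S s))
            (F.map (ModuleCat.ofHom (LinearMap.lsmul R R r)) m)
          = F.map (ModuleCat.ofHom (LinearMap.lsmul R R r) ≫
              ModuleCat.ofHom (LinearMap.toSpanSingleton R S s)) m := by
            rw [F.map_comp]; rfl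
        _ = F.map (ModuleCat.ofHom (LinearMap.toSpanSingleton R S (r • s))) m := by rw [h])

lemma alphaAddHom_tmul (S : ModuleCat R) (m : ↥(WM R F)) (s : ↥S) :
    alphaAddHom R F S (m ⊗ₜ[R] s) =
      F.map (ModuleCat.ofHom (LinearMap.toSpanSingleton R S s)) m :=
  TensorProduct.liftAddHom_tmul _ _ _ _

/-- The comparison natural transformation. -/
noncomputable def alphaNat :
    (tensorLeft (WM R F) ⋙ forget₂ (ModuleCat R) AddCommGrpCat) ⟶ F where
  app S := AddCommGrpCat.ofHom (alphaAddHom R F S)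
  naturality {S T} f := by
    ext x
    show alphaAddHom R F T ((WM R F ◁ f) x) = F.map f (alphaAddHom R F S x)
    induction x using TensorProduct.induction_on with
    | zero => simp
    | tmul m s =>
      rw [ModuleCat.MonoidalCategory.whiskerLeft_apply, alphaAddHom_tmul, alphaAddHom_tmul]
      have h' : f.hom.comp (LinearMap.toSpanSingleton R S s) =
          LinearMap.toSpanSingleton R T (f s) := by
        refine LinearMap.ext fun x => ?_
        show f (x • s) = x • f s
        rw [map_smul]
      have h : ModuleCat.ofHom (LinearMap.toSpanSingleton R S s) ≫ f =
          ModuleCat.ofHom (LinearMap.toSpanSingleton R T (f s)) := congrArg ModuleCat.ofHom h'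
      rw [← h, F.map_comp]; rfl
    | add x y hx hy =>
      simp only [map_add, hx, hy]

lemma alphaNat_app_apply (S : ModuleCat R) (x : TensorProduct R ↥(WM R F) ↥S) :
    (alphaNat R F).app S x = alphaAddHom R F S x := rfl

lemma alphaNat_app_R_isIso : IsIso ((alphaNat R F).app (ModuleCat.of R R)) := by
  have key : ∀ x : TensorProduct R ↥(WM R F) ↥(ModuleCat.of R R),
      (alphaNat R F).app (ModuleCat.of R R) x = TensorProduct.rid R ↥(WM R F) x := by
    intro x
    induction x using TensorProduct.induction_on with
    | zero => simp [alphaNat_app_apply]; rfl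
    | tmul m r =>
      rw [alphaNat_app_apply, alphaAddHom_tmul, TensorProduct.rid_tmul, WM_smul]
      have h' : LinearMap.toSpanSingleton R ↥(ModuleCat.of R R) r = LinearMap.lsmul R R r := by
        refine LinearMap.ext fun x => ?_
        exact @mul_comm R _ x r
      exact congrArg (fun h => F.map (ModuleCat.ofHom h) m) h'
    | add x y hx hy =>
      rw [map_add, hx, hy]
      exact (map_add _ _ _).symm
  have hb : Function.Bijective ((alphaNat R F).app (ModuleCat.of R R)) := by
    have : ⇑((alphaNat R F).app (ModuleCat.of R R)) = ⇑(TensorProduct.rid R ↥(WM R F)) :=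
      funext key
    rw [this]
    exact (TensorProduct.rid R ↥(WM R F)).bijective
  exact (CategoryTheory.ConcreteCategory.isIso_iff_bijective _).mpr hb

section
variable [Limits.PreservesFilteredColimits F] [Limits.PreservesFiniteColimits F]

lemma alphaNat_app_isIso (S : ModuleCat R) : IsIso ((alphaNat R F).app S) := by
  have h0 := alphaNat_app_R_isIso R F
  have hfin : ∀ (ι : Type) (t : Finset ι),
      IsIso ((alphaNat R F).app (ModuleCat.of R (↥t →₀ R))) := by
    intro ι t
    haveI := Classical.decEq ι
    exact isIso_app_of_isColimit (alphaNat R F)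
      (Discrete.functor (fun _ : ↥t => ModuleCat.of R R))
      (freeCofan R ↥t) (freeCofanIsColimit R ↥t) (fun j => h0)
  have hfree : ∀ ι : Type, IsIso ((alphaNat R F).app (ModuleCat.of R (ι →₀ R))) := by
    intro ι
    exact isIso_app_of_isColimit (alphaNat R F)
      (freeDiagram R ι) (freeCocone R ι) (freeCoconeIsColimit R ι) (fun t => hfin ι t)
  set g : (↥S →₀ R) →ₗ[R] ↥S := Finsupp.linearCombination R (id : ↥S → ↥S) with hgdef
  have hg : Function.Surjective g := Finsupp.linearCombination_id_surjective R ↥S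
  set K : Submodule R (↥S →₀ R) := LinearMap.ker g with hKdef
  set f : (↥K →₀ R) →ₗ[R] (↥S →₀ R) :=
    K.subtype.comp (Finsupp.linearCombination R (id : ↥K → ↥K)) with hfdef
  have hf : LinearMap.range f = K := by
    rw [hfdef, LinearMap.range_comp,
      LinearMap.range_eq_top.mpr (Finsupp.linearCombination_id_surjective R ↥K),
      Submodule.map_top, Submodule.range_subtype]
  set fc : ModuleCat.of R (↥K →₀ R) ⟶ ModuleCat.of R (↥S →₀ R) := ModuleCat.ofHom f with hfcdef
  have hcoker : IsIso ((alphaNat R F).app (Limits.colimit (Limits.parallelPair fc 0))) := by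
    refine isIso_app_of_isColimit (alphaNat R F) (Limits.parallelPair fc 0)
      (Limits.colimit.cocone _) (Limits.colimit.isColimit _) (fun j => ?_)
    cases j
    · exact hfree ↥K
    · exact hfree ↥S
  have e₂ : ((↥S →₀ R) ⧸ LinearMap.range fc.hom) ≃ₗ[R] ↥S :=
    (Submodule.quotEquivOfEq (LinearMap.range fc.hom) K hf).trans
      ((Submodule.quotEquivOfEq K (LinearMap.ker g) (by rw [hKdef])).trans
        (g.quotKerEquivOfSurjective hg))
  have e : Limits.colimit (Limits.parallelPair fc 0) ≅ S :=
    (ModuleCat.cokernelIsoRangeQuotient fc) ≪≫ e₂.toModuleIso ≪≫ (Iso.refl S)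
  exact isIso_app_of_iso (alphaNat R F) e hcoker


end

/-- Watts' theorem: an additive functor `F : ModuleCat R ⥤ AddCommGrp` that preserves
filtered colimits and finite colimits (i.e. is right exact) is naturally isomorphic to
`S ↦ F(R) ⊗_R S`, where `F(R)` carries its canonical `R`-module structure. -/
theorem stmt10
    [CategoryTheory.Limits.PreservesFilteredColimits F]
    [CategoryTheory.Limits.PreservesFiniteColimits F] :
    letI := wattsModule R F
    Nonempty (F ≅
      MonoidalCategory.tensorLeft (ModuleCat.of R (F.obj (ModuleCat.of R R))) ⋙
        forget₂ (ModuleCat R) AddCommGrpCat) := by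
  haveI : ∀ S : ModuleCat R, IsIso ((alphaNat R F).app S) := fun S => alphaNat_app_isIso R F S
  haveI : IsIso (alphaNat R F) := NatIso.isIso_of_isIso_app _
  exact ⟨(asIso (alphaNat R F)).symm⟩
end

section
/- Let F : ModuleCat R ⥤ AddCommGrp be an additive functor. For every R-module M there is a natural isomorphism Hom(M ⊗_R −, F) ≅ Hom_R(M, F(R)), i.e., natural transformations from the functor S ↦ M ⊗_R S to F correspond bijectively to R-module homomorphisms M → F(R). -/
open CategoryTheory TensorProduct

variable (R : Type) [CommRing R] (F : ModuleCat R ⥤ AddCommGrpCat) [F.Additive]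

/-- For an additive functor `F : ModuleCat R ⥤ AddCommGrpCat` and an `R`-module `M`, natural
transformations from the functor `S ↦ M ⊗_R S` to `F` correspond bijectively to `R`-linear
maps `M → F(R)`, the correspondence sending `η` to `m ↦ η_R (m ⊗ 1)`. -/
theorem stmt11 (M : Type) [AddCommGroup M] [Module R M] :
    letI := wattsModule R F
    ∃ e : (MonoidalCategory.tensorLeft (ModuleCat.of R M) ⋙
        forget₂ (ModuleCat R) AddCommGrpCat ⟶ F) ≃ (M →ₗ[R] F.obj (ModuleCat.of R R)),
      ∀ η (m : M), e η m = η.app (ModuleCat.of R R) (m ⊗ₜ[R] (1 : R)) := by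
  classical
  letI := wattsModule R F
  have hsmul : ∀ (r : R) (x : F.obj (ModuleCat.of R R)),
      r • x = F.map (ModuleCat.ofHom (LinearMap.lsmul R R r)) x := fun r x => rfl
  -- the forward map
  let toFun : (MonoidalCategory.tensorLeft (ModuleCat.of R M) ⋙
      forget₂ (ModuleCat R) AddCommGrpCat ⟶ F) → (M →ₗ[R] F.obj (ModuleCat.of R R)) := fun η =>
    { toFun := fun m => η.app (ModuleCat.of R R) (m ⊗ₜ[R] (1 : R))
      map_add' := fun m₁ m₂ => by
        show η.app (ModuleCat.of R R) ((m₁ + m₂) ⊗ₜ[R] (1:R)) =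
          η.app (ModuleCat.of R R) (m₁ ⊗ₜ[R] (1:R)) + η.app (ModuleCat.of R R) (m₂ ⊗ₜ[R] (1:R))
        rw [show ((m₁ + m₂) ⊗ₜ[R] (1 : R)) = m₁ ⊗ₜ[R] (1:R) + m₂ ⊗ₜ[R] (1:R) from
          TensorProduct.add_tmul _ _ _]
        exact map_add _ _ _
      map_smul' := fun r m => by
        show η.app (ModuleCat.of R R) ((r • m) ⊗ₜ[R] (1:R)) =
          r • η.app (ModuleCat.of R R) (m ⊗ₜ[R] (1:R))
        have h : η.app (ModuleCat.of R R) (m ⊗ₜ[R] (r • (1:R))) =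
            F.map (ModuleCat.ofHom (LinearMap.lsmul R R r))
              (η.app (ModuleCat.of R R) (m ⊗ₜ[R] (1:R))) :=
          ConcreteCategory.congr_hom
            (η.naturality (ModuleCat.ofHom (LinearMap.lsmul R R r))) (m ⊗ₜ[R] (1:R))
        rw [hsmul, ← h, TensorProduct.smul_tmul] }
  -- components of the inverse natural transformation
  let comp : (M →ₗ[R] F.obj (ModuleCat.of R R)) → ∀ (S : ModuleCat R),
      ((MonoidalCategory.tensorLeft (ModuleCat.of R M) ⋙
        forget₂ (ModuleCat R) AddCommGrpCat).obj S) ⟶ F.obj S := fun f S =>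
    AddCommGrpCat.ofHom <| TensorProduct.liftAddHom (R := R)
      { toFun := fun m =>
          { toFun := fun s => F.map (ModuleCat.ofHom (LinearMap.toSpanSingleton R S s)) (f m)
            map_zero' := by
              show F.map (ModuleCat.ofHom (LinearMap.toSpanSingleton R S 0)) (f m) = 0
              have h : ModuleCat.ofHom (LinearMap.toSpanSingleton R S 0) =
                  (0 : ModuleCat.of R R ⟶ S) := by
                refine ModuleCat.hom_ext (LinearMap.ext fun x => ?_)
                show (show R from x) • (0 : S) = (0 : ModuleCat.of R R ⟶ S) x
                rw [smul_zero]; rfl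
              rw [h, F.map_zero]; rfl
            map_add' := fun s t => by
              show F.map (ModuleCat.ofHom (LinearMap.toSpanSingleton R S (s + t))) (f m) =
                F.map (ModuleCat.ofHom (LinearMap.toSpanSingleton R S s)) (f m) +
                F.map (ModuleCat.ofHom (LinearMap.toSpanSingleton R S t)) (f m)
              have h : ModuleCat.ofHom (LinearMap.toSpanSingleton R S (s + t)) =
                  ModuleCat.ofHom (LinearMap.toSpanSingleton R S s) +
                  ModuleCat.ofHom (LinearMap.toSpanSingleton R S t) := by
                refine ModuleCat.hom_ext (LinearMap.ext fun x => ?_)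
                exact smul_add (show R from x) s t
              rw [h, F.map_add]; rfl }
        map_zero' := by
          refine AddMonoidHom.ext fun s => ?_
          show F.map (ModuleCat.ofHom (LinearMap.toSpanSingleton R S s)) (f 0) = 0
          rw [map_zero, map_zero]
        map_add' := fun m₁ m₂ => by
          refine AddMonoidHom.ext fun s => ?_
          show F.map (ModuleCat.ofHom (LinearMap.toSpanSingleton R S s)) (f (m₁ + m₂)) =
            F.map (ModuleCat.ofHom (LinearMap.toSpanSingleton R S s)) (f m₁) +
            F.map (ModuleCat.ofHom (LinearMap.toSpanSingleton R S s)) (f m₂)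
          rw [map_add, map_add] }
      (by
        intro r m s
        show F.map (ModuleCat.ofHom (LinearMap.toSpanSingleton R S s)) (f (r • m)) =
          F.map (ModuleCat.ofHom (LinearMap.toSpanSingleton R S (r • s))) (f m)
        have hcomp : ModuleCat.ofHom (LinearMap.lsmul R R r) ≫
            ModuleCat.ofHom (LinearMap.toSpanSingleton R S s) =
            ModuleCat.ofHom (LinearMap.toSpanSingleton R S (r • s)) := by
          refine ModuleCat.hom_ext (LinearMap.ext fun x => ?_)
          show (r * (show R from x)) • s = (show R from x) • r • s
          rw [mul_comm, mul_smul]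
        rw [map_smul, hsmul, ← hcomp, F.map_comp]
        rfl)
  -- the inverse map
  let invFun : (M →ₗ[R] F.obj (ModuleCat.of R R)) →
      (MonoidalCategory.tensorLeft (ModuleCat.of R M) ⋙
        forget₂ (ModuleCat R) AddCommGrpCat ⟶ F) := fun f =>
    { app := comp f
      naturality := by
        intro S T g
        refine AddCommGrpCat.ext fun x => ?_
        show comp f T (((MonoidalCategory.tensorLeft (ModuleCat.of R M) ⋙
          forget₂ (ModuleCat R) AddCommGrpCat).map g) x) = F.map g (comp f S x)
        refine TensorProduct.induction_on x ?_ ?_ ?_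
        · simp only [map_zero]
        · intro m s
          show F.map (ModuleCat.ofHom (LinearMap.toSpanSingleton R T (g s))) (f m) =
            F.map g (F.map (ModuleCat.ofHom (LinearMap.toSpanSingleton R S s)) (f m))
          have hcomp : ModuleCat.ofHom (LinearMap.toSpanSingleton R S s) ≫ g =
              ModuleCat.ofHom (LinearMap.toSpanSingleton R T (g s)) := by
            refine ModuleCat.hom_ext (LinearMap.ext fun x => ?_)
            show g ((show R from x) • s) = (show R from x) • g s
            rw [map_smul]
          rw [← hcomp, F.map_comp]
          rfl
        · intro x y hx hy
          rw [map_add, map_add, hx, hy, map_add (ConcreteCategory.hom (comp f S)) x y]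
          exact (map_add (ConcreteCategory.hom (F.map g)) _ _).symm }
  refine ⟨⟨toFun, invFun, ?_, ?_⟩, fun η m => rfl⟩
  · intro η
    refine NatTrans.ext (funext fun S => AddCommGrpCat.ext fun x => ?_)
    show comp (toFun η) S x = η.app S x
    refine TensorProduct.induction_on x ?_ ?_ ?_
    · simp only [map_zero]
    · intro m s
      show F.map (ModuleCat.ofHom (LinearMap.toSpanSingleton R S s))
        (η.app (ModuleCat.of R R) (m ⊗ₜ[R] (1 : R))) = η.app S (m ⊗ₜ[R] s)
      have h : η.app S (m ⊗ₜ[R] ((1:R) • s)) =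
          F.map (ModuleCat.ofHom (LinearMap.toSpanSingleton R S s))
            (η.app (ModuleCat.of R R) (m ⊗ₜ[R] (1:R))) :=
        ConcreteCategory.congr_hom
          (η.naturality (ModuleCat.ofHom (LinearMap.toSpanSingleton R S s))) (m ⊗ₜ[R] (1:R))
      rw [← h, one_smul]
    · intro x y hx hy
      rw [map_add, map_add, hx, hy]
  · intro f
    refine LinearMap.ext fun m => ?_
    show F.map (ModuleCat.ofHom (LinearMap.toSpanSingleton R (ModuleCat.of R R) (1 : R)))
      (f m) = f m
    have h : ModuleCat.ofHom (LinearMap.toSpanSingleton R (ModuleCat.of R R) (1 : R)) =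
        𝟙 (ModuleCat.of R R) := by
      refine ModuleCat.hom_ext (LinearMap.ext fun x => ?_)
      exact mul_one (show R from x)
    rw [h, F.map_id]; rfl
end

section
/- If M is a strict Mittag-Leffler R-module, then M embeds as a pure submodule of a direct product of finitely presented R-modules: there exists a family (P_j)_{j∈J} of finitely presented R-modules and a pure monomorphism M → ∏_{j∈J} P_j. -/
/-- A strict Mittag-Leffler module (every finitely generated submodule `N ⊆ M` admits a
finitely presented module `P` and maps `f : M → P`, `g : P → M` with `g ∘ f ∘ i = i`, where
`i` is the inclusion) embeds as a pure submodule of a direct product of finitely presented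
modules. -/
theorem stmt17 (R : Type) [CommRing R] (M : Type) [AddCommGroup M] [Module R M]
    (hSML : ∀ N : Submodule R M, N.FG →
      ∃ (P : Type) (_ : AddCommGroup P) (_ : Module R P) (_ : Module.FinitePresentation R P)
        (f : M →ₗ[R] P) (g : P →ₗ[R] M),
        (g.comp f).comp N.subtype = N.subtype) :
    ∃ (J : Type) (P : J → Type) (_ : ∀ j, AddCommGroup (P j)) (_ : ∀ j, Module R (P j))
      (_ : ∀ j, Module.FinitePresentation R (P j)) (u : M →ₗ[R] ∀ j, P j),
      Function.Injective u ∧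
        ∀ (S : Type) (_ : AddCommGroup S) (_ : Module R S),
          Function.Injective (TensorProduct.map u (LinearMap.id : S →ₗ[R] S)) := by
  classical
  choose P hAdd hMod hFP f g hfg using
    fun N : {N : Submodule R M // N.FG} => hSML N.1 N.2
  letI : ∀ j, AddCommGroup (P j) := hAdd
  letI : ∀ j, Module R (P j) := hMod
  refine ⟨{N : Submodule R M // N.FG}, P, hAdd, hMod, hFP, LinearMap.pi f, ?_, ?_⟩
  · rw [injective_iff_map_eq_zero]
    intro z hz
    set N : Submodule R M := Submodule.span R {z} with hNdef
    have hN : N.FG := Submodule.fg_span_singleton z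
    set j : {N : Submodule R M // N.FG} := ⟨N, hN⟩
    have hzN : z ∈ N := Submodule.mem_span_singleton_self z
    have h1 : g j (f j z) = z := by
      have := congrArg (fun φ => φ ⟨z, hzN⟩) (hfg j)
      simpa using this
    have h2 : f j z = 0 := by simpa using congrFun hz j
    rw [h2, map_zero] at h1
    exact h1.symm
  · intro S _ _
    rw [injective_iff_map_eq_zero]
    intro t ht
    obtain ⟨F, hF⟩ := TensorProduct.exists_finset t
    set N : Submodule R M := Submodule.span R (↑(F.image Prod.fst) : Set M) with hNdef
    have hN : N.FG := ⟨F.image Prod.fst, rfl⟩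
    set j : {N : Submodule R M // N.FG} := ⟨N, hN⟩
    -- f j applied to t gives 0
    have h1 : TensorProduct.map (f j) (LinearMap.id : S →ₗ[R] S) t = 0 := by
      have hcomp : (f j : M →ₗ[R] P j) = (LinearMap.proj j).comp (LinearMap.pi f) := by
        ext x; simp
      rw [hcomp, ← LinearMap.id_comp (LinearMap.id : S →ₗ[R] S),
        TensorProduct.map_comp, LinearMap.comp_apply, ht, map_zero]
    -- g j ∘ f j fixes t
    have h2 : TensorProduct.map ((g j).comp (f j)) (LinearMap.id : S →ₗ[R] S) t = t := by
      rw [hF, map_sum]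
      refine Finset.sum_congr rfl fun p hp => ?_
      have hpN : p.1 ∈ N := Submodule.subset_span (by
        simp only [Finset.coe_image, Set.mem_image, Finset.mem_coe]
        exact ⟨p, hp, rfl⟩)
      have hfix : g j (f j p.1) = p.1 := by
        have := congrArg (fun φ => φ ⟨p.1, hpN⟩) (hfg j)
        simpa using this
      simp [TensorProduct.map_tmul, hfix]
    rw [← h2, ← LinearMap.id_comp (LinearMap.id : S →ₗ[R] S),
      TensorProduct.map_comp, LinearMap.comp_apply, h1, map_zero]
end
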